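/- arXiv:math/0104034 — 2 statements merged into one kernel-verified Lean document; each statement's English description precedes it below -/
import Mathlib

section
/- Let p, q, V, W : ℝ² → ℝ be smooth and let ψ : ℝ² → ℂ⁴ be a smooth solution of the Lie–Wilczynski system such that at every point of ℝ² the four vectors ψ, ∂₁ψ, ∂₂ψ, ∂₁∂₂ψ are linearly independent over ℂ. Then the compatibility conditions hold on all of ℝ²: ∂₂³p − 2W ∂₂p − p ∂₂W + ∂₁³q − 2V ∂₁q − q ∂₁V = 0, ∂₁W = 2q ∂₂p + p ∂₂q, and ∂₂V = 2p ∂₁q + q ∂₁p. -/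
open Complex ComplexConjugate

noncomputable section

/-- Partial derivative in the first variable of a two-variable function. -/
def pd1 {E : Type*} [NormedAddCommGroup E] [NormedSpace ℝ E]
    (f : ℝ → ℝ → E) (x y : ℝ) : E := deriv (fun t => f t y) x

/-- Partial derivative in the second variable of a two-variable function. -/
def pd2 {E : Type*} [NormedAddCommGroup E] [NormedSpace ℝ E]
    (f : ℝ → ℝ → E) (x y : ℝ) : E := deriv (fun t => f x t) y

/-- The pseudo-Hermitian form of signature (2,2) on ℂ⁴:
`⟨a,b⟩ = −a₀·conj(b₃) + a₁·conj(b₂) + a₂·conj(b₁) − a₃·conj(b₀)`. -/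
def herm4 (a b : Fin 4 → ℂ) : ℂ :=
  -(a 0 * conj (b 3)) + a 1 * conj (b 2) + a 2 * conj (b 1) - a 3 * conj (b 0)

/-- The wedge product of two vectors of ℂ⁴, as a vector in ℂ⁶, in the explicit
coordinates `y₀ = (p₀₂ − p₃₁)/2, y₁ = (p₀₂ + p₃₁)/2, y₂ = (p₀₃ + p₁₂)/2,
y₃ = (p₀₃ − p₁₂)/(2i), y₄ = (p₀₁ − p₂₃)/(2i), y₅ = (p₀₁ + p₂₃)/(2i)`,
where `p_{ij} = aᵢbⱼ − aⱼbᵢ`. -/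
def wedgeC (a b : Fin 4 → ℂ) : Fin 6 → ℂ :=
  ![((a 0 * b 2 - a 2 * b 0) - (a 3 * b 1 - a 1 * b 3)) / 2,
    ((a 0 * b 2 - a 2 * b 0) + (a 3 * b 1 - a 1 * b 3)) / 2,
    ((a 0 * b 3 - a 3 * b 0) + (a 1 * b 2 - a 2 * b 1)) / 2,
    ((a 0 * b 3 - a 3 * b 0) - (a 1 * b 2 - a 2 * b 1)) / (2 * Complex.I),
    ((a 0 * b 1 - a 1 * b 0) - (a 2 * b 3 - a 3 * b 2)) / (2 * Complex.I),
    ((a 0 * b 1 - a 1 * b 0) + (a 2 * b 3 - a 3 * b 2)) / (2 * Complex.I)]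

/-- The real bilinear form of signature (4,2) on ℝ⁶ (the Lie quadric form). -/
def Q6 (x y : Fin 6 → ℝ) : ℝ :=
  -(x 0 * y 0) + x 1 * y 1 + x 2 * y 2 + x 3 * y 3 + x 4 * y 4 - x 5 * y 5

/-- The pseudo-Hermitian form of signature (4,2) on ℂ⁶. -/
def herm6 (x y : Fin 6 → ℂ) : ℂ :=
  -(x 0 * conj (y 0)) + x 1 * conj (y 1) + x 2 * conj (y 2) + x 3 * conj (y 3)
    + x 4 * conj (y 4) - x 5 * conj (y 5)

/-- The complex bilinear form on ℂ⁶. -/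
def bil6 (x y : Fin 6 → ℂ) : ℂ :=
  -(x 0 * y 0) + x 1 * y 1 + x 2 * y 2 + x 3 * y 3 + x 4 * y 4 - x 5 * y 5

/-- The Euclidean dot product on ℝ³. -/
def dot3 (u v : Fin 3 → ℝ) : ℝ := u 0 * v 0 + u 1 * v 1 + u 2 * v 2

/-- The Schwarzian derivative `S(h) = h‴/h′ − (3/2)(h″/h′)²`. -/
def schwarzian (h : ℝ → ℝ) (x : ℝ) : ℝ :=
  deriv (deriv (deriv h)) x / deriv h x - (3/2) * (deriv (deriv h) x / deriv h x) ^ 2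

/-- `(∂₁ + c)² u`, an abbreviation for `∂₁(∂₁u + c·u) + c·(∂₁u + c·u)`. -/
def msq1 (c u : ℝ → ℝ → ℂ) : ℝ → ℝ → ℂ := fun x y =>
  pd1 (fun x' y' => pd1 u x' y' + c x' y' * u x' y') x y
    + c x y * (pd1 u x y + c x y * u x y)

/-- `(∂₂ + c)² u`, an abbreviation for `∂₂(∂₂u + c·u) + c·(∂₂u + c·u)`. -/
def msq2 (c u : ℝ → ℝ → ℂ) : ℝ → ℝ → ℂ := fun x y =>
  pd2 (fun x' y' => pd2 u x' y' + c x' y' * u x' y') x y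
    + c x y * (pd2 u x y + c x y * u x y)

/-- The real part map `U = −2·Im(ψ ∧ ∂₁ψ)` used to define the first curvature sphere. -/
def Uvec (ψ : ℝ → ℝ → Fin 4 → ℂ) : ℝ → ℝ → Fin 6 → ℝ :=
  fun x y i => -2 * (wedgeC (ψ x y) (pd1 ψ x y) i).im

/-- The real part map `S = 2·Re(ψ ∧ ∂₂ψ)` used to define the second curvature sphere. -/
def Svec (ψ : ℝ → ℝ → Fin 4 → ℂ) : ℝ → ℝ → Fin 6 → ℝ :=
  fun x y i => 2 * (wedgeC (ψ x y) (pd2 ψ x y) i).re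

section helpers
variable {E : Type*} [NormedAddCommGroup E] [NormedSpace ℝ E]

def unc (f : ℝ → ℝ → E) : ℝ × ℝ → E := fun z => f z.1 z.2

theorem contDiff_slice1 {f : ℝ → ℝ → E} (hf : ContDiff ℝ (⊤ : ℕ∞) (unc f)) (y : ℝ) :
    ContDiff ℝ (⊤ : ℕ∞) (fun t => f t y) := hf.comp (contDiff_id.prodMk contDiff_const)
theorem contDiff_slice2 {f : ℝ → ℝ → E} (hf : ContDiff ℝ (⊤ : ℕ∞) (unc f)) (x : ℝ) :
    ContDiff ℝ (⊤ : ℕ∞) (fun t => f x t) := hf.comp (contDiff_const.prodMk contDiff_id)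
theorem hasDerivAt_pd1 {f : ℝ → ℝ → E} (hf : ContDiff ℝ (⊤ : ℕ∞) (unc f)) (x y : ℝ) :
    HasDerivAt (fun t => f t y) (pd1 f x y) x :=
  (((contDiff_slice1 hf y).differentiable (by simp)) x).hasDerivAt
theorem hasDerivAt_pd2 {f : ℝ → ℝ → E} (hf : ContDiff ℝ (⊤ : ℕ∞) (unc f)) (x y : ℝ) :
    HasDerivAt (fun t => f x t) (pd2 f x y) y :=
  (((contDiff_slice2 hf x).differentiable (by simp)) y).hasDerivAt

theorem pd1_eq_fderiv {f : ℝ → ℝ → E} (hf : ContDiff ℝ (⊤ : ℕ∞) (unc f)) (x y : ℝ) :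
    pd1 f x y = fderiv ℝ (unc f) (x, y) (1, 0) := by
  have h1 : HasFDerivAt (unc f) (fderiv ℝ (unc f) (x, y)) (x, y) :=
    ((hf.differentiable (by simp)) (x, y)).hasFDerivAt
  have h2 : HasDerivAt (fun t : ℝ => ((t, y) : ℝ × ℝ)) (1, 0) x :=
    (hasDerivAt_id x).prodMk (hasDerivAt_const x y)
  exact (h1.comp_hasDerivAt x h2).deriv ▸ rfl

theorem pd2_eq_fderiv {f : ℝ → ℝ → E} (hf : ContDiff ℝ (⊤ : ℕ∞) (unc f)) (x y : ℝ) :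
    pd2 f x y = fderiv ℝ (unc f) (x, y) (0, 1) := by
  have h1 : HasFDerivAt (unc f) (fderiv ℝ (unc f) (x, y)) (x, y) :=
    ((hf.differentiable (by simp)) (x, y)).hasFDerivAt
  have h2 : HasDerivAt (fun t : ℝ => ((x, t) : ℝ × ℝ)) (0, 1) y :=
    (hasDerivAt_const y x).prodMk (hasDerivAt_id y)
  exact (h1.comp_hasDerivAt y h2).deriv ▸ rfl

theorem contDiff_pd1 {f : ℝ → ℝ → E} (hf : ContDiff ℝ (⊤ : ℕ∞) (unc f)) :
    ContDiff ℝ (⊤ : ℕ∞) (unc (pd1 f)) := by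
  have h : unc (pd1 f) = fun z : ℝ × ℝ => fderiv ℝ (unc f) z (1, 0) := by
    funext z; exact pd1_eq_fderiv hf z.1 z.2
  rw [h]; exact (hf.fderiv_right (by simp)).clm_apply contDiff_const

theorem contDiff_pd2 {f : ℝ → ℝ → E} (hf : ContDiff ℝ (⊤ : ℕ∞) (unc f)) :
    ContDiff ℝ (⊤ : ℕ∞) (unc (pd2 f)) := by
  have h : unc (pd2 f) = fun z : ℝ × ℝ => fderiv ℝ (unc f) z (0, 1) := by
    funext z; exact pd2_eq_fderiv hf z.1 z.2
  rw [h]; exact (hf.fderiv_right (by simp)).clm_apply contDiff_const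

theorem pd_swap {f : ℝ → ℝ → E} (hf : ContDiff ℝ (⊤ : ℕ∞) (unc f)) (x y : ℝ) :
    pd1 (pd2 f) x y = pd2 (pd1 f) x y := by
  have hsym : IsSymmSndFDerivAt ℝ (unc f) (x, y) :=
    hf.contDiffAt.isSymmSndFDerivAt (by rw [minSmoothness_of_isRCLikeNormedField]; exact WithTop.coe_le_coe.mpr (le_top : (2 : ℕ∞) ≤ ⊤))
  have hf' : ContDiff ℝ (⊤ : ℕ∞) (fderiv ℝ (unc f)) := hf.fderiv_right (by simp)
  have e1 : pd1 (pd2 f) x y = fderiv ℝ (fderiv ℝ (unc f)) (x, y) (1, 0) (0, 1) := by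
    have h1 : HasFDerivAt (fun z : ℝ × ℝ => fderiv ℝ (unc f) z (0, 1))
        ((ContinuousLinearMap.apply ℝ E ((0 : ℝ), (1 : ℝ))).comp
          (fderiv ℝ (fderiv ℝ (unc f)) (x, y))) (x, y) :=
      (ContinuousLinearMap.apply ℝ E ((0:ℝ), (1:ℝ))).hasFDerivAt.comp (x, y)
        ((hf'.differentiable (by simp)) (x, y)).hasFDerivAt
    have h2 : HasDerivAt (fun t : ℝ => ((t, y) : ℝ × ℝ)) (1, 0) x :=
      (hasDerivAt_id x).prodMk (hasDerivAt_const x y)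
    have h3 := (h1.comp_hasDerivAt x h2).deriv
    simp only [Function.comp_def] at h3
    have h4 : (fun t : ℝ => fderiv ℝ (unc f) (t, y) (0, 1)) = fun t => pd2 f t y := by
      funext t; exact (pd2_eq_fderiv hf t y).symm
    rw [h4] at h3
    simpa [pd1] using h3
  have e2 : pd2 (pd1 f) x y = fderiv ℝ (fderiv ℝ (unc f)) (x, y) (0, 1) (1, 0) := by
    have h1 : HasFDerivAt (fun z : ℝ × ℝ => fderiv ℝ (unc f) z (1, 0))
        ((ContinuousLinearMap.apply ℝ E ((1 : ℝ), (0 : ℝ))).comp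
          (fderiv ℝ (fderiv ℝ (unc f)) (x, y))) (x, y) :=
      (ContinuousLinearMap.apply ℝ E ((1:ℝ), (0:ℝ))).hasFDerivAt.comp (x, y)
        ((hf'.differentiable (by simp)) (x, y)).hasFDerivAt
    have h2 : HasDerivAt (fun t : ℝ => ((x, t) : ℝ × ℝ)) (0, 1) y :=
      (hasDerivAt_const y x).prodMk (hasDerivAt_id y)
    have h3 := (h1.comp_hasDerivAt y h2).deriv
    simp only [Function.comp_def] at h3
    have h4 : (fun t : ℝ => fderiv ℝ (unc f) (x, t) (1, 0)) = fun t => pd1 f x t := by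
      funext t; exact (pd1_eq_fderiv hf x t).symm
    rw [h4] at h3
    simpa [pd2] using h3
  rw [e1, e2, hsym (1, 0) (0, 1)]

end helpers

section comb
variable {E : Type*} [NormedAddCommGroup E] [NormedSpace ℝ E]
  [NormedSpace ℂ E] [IsScalarTower ℝ ℂ E]

theorem contDiff_mulc {c d : ℝ → ℝ → ℂ}
    (hc : ContDiff ℝ (⊤ : ℕ∞) (unc c)) (hd : ContDiff ℝ (⊤ : ℕ∞) (unc d)) :
    ContDiff ℝ (⊤ : ℕ∞) (unc (fun x y => c x y * d x y)) := hc.mul hd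

theorem pd2_mulc {c d : ℝ → ℝ → ℂ}
    (hc : ContDiff ℝ (⊤ : ℕ∞) (unc c)) (hd : ContDiff ℝ (⊤ : ℕ∞) (unc d)) (x y : ℝ) :
    pd2 (fun x y => c x y * d x y) x y = pd2 c x y * d x y + c x y * pd2 d x y := by
  have := ((hasDerivAt_pd2 hc x y).mul (hasDerivAt_pd2 hd x y)).deriv
  simpa [pd2, Pi.mul_def, Pi.add_def, Pi.smul_def'] using this

theorem pd1_mulc {c d : ℝ → ℝ → ℂ}
    (hc : ContDiff ℝ (⊤ : ℕ∞) (unc c)) (hd : ContDiff ℝ (⊤ : ℕ∞) (unc d)) (x y : ℝ) :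
    pd1 (fun x y => c x y * d x y) x y = pd1 c x y * d x y + c x y * pd1 d x y := by
  have := ((hasDerivAt_pd1 hc x y).mul (hasDerivAt_pd1 hd x y)).deriv
  simpa [pd1, Pi.mul_def, Pi.add_def, Pi.smul_def'] using this

theorem pd2_comb2 {c1 c2 : ℝ → ℝ → ℂ} {w1 w2 : ℝ → ℝ → E}
    (hc1 : ContDiff ℝ (⊤ : ℕ∞) (unc c1)) (hw1 : ContDiff ℝ (⊤ : ℕ∞) (unc w1))
    (hc2 : ContDiff ℝ (⊤ : ℕ∞) (unc c2)) (hw2 : ContDiff ℝ (⊤ : ℕ∞) (unc w2)) (x y : ℝ) :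
    pd2 (fun x y => c1 x y • w1 x y + c2 x y • w2 x y) x y
      = (c1 x y • pd2 w1 x y + pd2 c1 x y • w1 x y)
        + (c2 x y • pd2 w2 x y + pd2 c2 x y • w2 x y) := by
  have := (((hasDerivAt_pd2 hc1 x y).smul (hasDerivAt_pd2 hw1 x y)).add
    ((hasDerivAt_pd2 hc2 x y).smul (hasDerivAt_pd2 hw2 x y))).deriv
  simpa [pd2, Pi.mul_def, Pi.add_def, Pi.smul_def'] using this

theorem pd1_comb2 {c1 c2 : ℝ → ℝ → ℂ} {w1 w2 : ℝ → ℝ → E}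
    (hc1 : ContDiff ℝ (⊤ : ℕ∞) (unc c1)) (hw1 : ContDiff ℝ (⊤ : ℕ∞) (unc w1))
    (hc2 : ContDiff ℝ (⊤ : ℕ∞) (unc c2)) (hw2 : ContDiff ℝ (⊤ : ℕ∞) (unc w2)) (x y : ℝ) :
    pd1 (fun x y => c1 x y • w1 x y + c2 x y • w2 x y) x y
      = (c1 x y • pd1 w1 x y + pd1 c1 x y • w1 x y)
        + (c2 x y • pd1 w2 x y + pd1 c2 x y • w2 x y) := by
  have := (((hasDerivAt_pd1 hc1 x y).smul (hasDerivAt_pd1 hw1 x y)).add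
    ((hasDerivAt_pd1 hc2 x y).smul (hasDerivAt_pd1 hw2 x y))).deriv
  simpa [pd1, Pi.mul_def, Pi.add_def, Pi.smul_def'] using this

theorem pd2_comb5 {c1 c2 c3 c4 c5 : ℝ → ℝ → ℂ} {w1 w2 w3 w4 w5 : ℝ → ℝ → E}
    (hc1 : ContDiff ℝ (⊤ : ℕ∞) (unc c1)) (hw1 : ContDiff ℝ (⊤ : ℕ∞) (unc w1))
    (hc2 : ContDiff ℝ (⊤ : ℕ∞) (unc c2)) (hw2 : ContDiff ℝ (⊤ : ℕ∞) (unc w2))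
    (hc3 : ContDiff ℝ (⊤ : ℕ∞) (unc c3)) (hw3 : ContDiff ℝ (⊤ : ℕ∞) (unc w3))
    (hc4 : ContDiff ℝ (⊤ : ℕ∞) (unc c4)) (hw4 : ContDiff ℝ (⊤ : ℕ∞) (unc w4))
    (hc5 : ContDiff ℝ (⊤ : ℕ∞) (unc c5)) (hw5 : ContDiff ℝ (⊤ : ℕ∞) (unc w5)) (x y : ℝ) :
    pd2 (fun x y => c1 x y • w1 x y + c2 x y • w2 x y + c3 x y • w3 x y
        + c4 x y • w4 x y + c5 x y • w5 x y) x y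
      = (c1 x y • pd2 w1 x y + pd2 c1 x y • w1 x y)
        + (c2 x y • pd2 w2 x y + pd2 c2 x y • w2 x y)
        + (c3 x y • pd2 w3 x y + pd2 c3 x y • w3 x y)
        + (c4 x y • pd2 w4 x y + pd2 c4 x y • w4 x y)
        + (c5 x y • pd2 w5 x y + pd2 c5 x y • w5 x y) := by
  have h1 := (hasDerivAt_pd2 hc1 x y).smul (hasDerivAt_pd2 hw1 x y)
  have h2 := (hasDerivAt_pd2 hc2 x y).smul (hasDerivAt_pd2 hw2 x y)
  have h3 := (hasDerivAt_pd2 hc3 x y).smul (hasDerivAt_pd2 hw3 x y)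
  have h4 := (hasDerivAt_pd2 hc4 x y).smul (hasDerivAt_pd2 hw4 x y)
  have h5 := (hasDerivAt_pd2 hc5 x y).smul (hasDerivAt_pd2 hw5 x y)
  have := ((((h1.add h2).add h3).add h4).add h5).deriv
  simpa [pd2, Pi.mul_def, Pi.add_def, Pi.smul_def'] using this

theorem pd1_comb5 {c1 c2 c3 c4 c5 : ℝ → ℝ → ℂ} {w1 w2 w3 w4 w5 : ℝ → ℝ → E}
    (hc1 : ContDiff ℝ (⊤ : ℕ∞) (unc c1)) (hw1 : ContDiff ℝ (⊤ : ℕ∞) (unc w1))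
    (hc2 : ContDiff ℝ (⊤ : ℕ∞) (unc c2)) (hw2 : ContDiff ℝ (⊤ : ℕ∞) (unc w2))
    (hc3 : ContDiff ℝ (⊤ : ℕ∞) (unc c3)) (hw3 : ContDiff ℝ (⊤ : ℕ∞) (unc w3))
    (hc4 : ContDiff ℝ (⊤ : ℕ∞) (unc c4)) (hw4 : ContDiff ℝ (⊤ : ℕ∞) (unc w4))
    (hc5 : ContDiff ℝ (⊤ : ℕ∞) (unc c5)) (hw5 : ContDiff ℝ (⊤ : ℕ∞) (unc w5)) (x y : ℝ) :
    pd1 (fun x y => c1 x y • w1 x y + c2 x y • w2 x y + c3 x y • w3 x y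
        + c4 x y • w4 x y + c5 x y • w5 x y) x y
      = (c1 x y • pd1 w1 x y + pd1 c1 x y • w1 x y)
        + (c2 x y • pd1 w2 x y + pd1 c2 x y • w2 x y)
        + (c3 x y • pd1 w3 x y + pd1 c3 x y • w3 x y)
        + (c4 x y • pd1 w4 x y + pd1 c4 x y • w4 x y)
        + (c5 x y • pd1 w5 x y + pd1 c5 x y • w5 x y) := by
  have h1 := (hasDerivAt_pd1 hc1 x y).smul (hasDerivAt_pd1 hw1 x y)
  have h2 := (hasDerivAt_pd1 hc2 x y).smul (hasDerivAt_pd1 hw2 x y)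
  have h3 := (hasDerivAt_pd1 hc3 x y).smul (hasDerivAt_pd1 hw3 x y)
  have h4 := (hasDerivAt_pd1 hc4 x y).smul (hasDerivAt_pd1 hw4 x y)
  have h5 := (hasDerivAt_pd1 hc5 x y).smul (hasDerivAt_pd1 hw5 x y)
  have := ((((h1.add h2).add h3).add h4).add h5).deriv
  simpa [pd1, Pi.mul_def, Pi.add_def, Pi.smul_def'] using this

end comb

section key
variable {E : Type*} [NormedAddCommGroup E] [NormedSpace ℝ E]
  [NormedSpace ℂ E] [IsScalarTower ℝ ℂ E]

theorem key_abstract {ψ : ℝ → ℝ → E} {a b c d : ℝ → ℝ → ℂ}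
    (hψ : ContDiff ℝ (⊤ : ℕ∞) (unc ψ)) (ha : ContDiff ℝ (⊤ : ℕ∞) (unc a)) (hb : ContDiff ℝ (⊤ : ℕ∞) (unc b))
    (hc : ContDiff ℝ (⊤ : ℕ∞) (unc c)) (hd : ContDiff ℝ (⊤ : ℕ∞) (unc d))
    (H1 : ∀ x y, pd1 (pd1 ψ) x y = a x y • pd2 ψ x y + b x y • ψ x y)
    (H2 : ∀ x y, pd2 (pd2 ψ) x y = c x y • pd1 ψ x y + d x y • ψ x y)
    (hli : ∀ x y, LinearIndependent ℂ ![ψ x y, pd1 ψ x y, pd2 ψ x y, pd1 (pd2 ψ) x y])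
    (x y : ℝ) :
    (2 * pd2 a x y * d x y + a x y * pd2 d x y + pd2 (pd2 b) x y
      - (2 * pd1 c x y * b x y + c x y * pd1 b x y + pd1 (pd1 d) x y) = 0) ∧
    (2 * pd2 a x y * c x y + a x y * pd2 c x y - pd1 (pd1 c) x y - 2 * pd1 d x y = 0) ∧
    (pd2 (pd2 a) x y + 2 * pd2 b x y - 2 * pd1 c x y * a x y - c x y * pd1 a x y = 0) := by
  have hu : ContDiff ℝ (⊤ : ℕ∞) (unc (pd1 ψ)) := contDiff_pd1 hψ
  have hv : ContDiff ℝ (⊤ : ℕ∞) (unc (pd2 ψ)) := contDiff_pd2 hψ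
  have ha2 : ContDiff ℝ (⊤ : ℕ∞) (unc (pd2 a)) := contDiff_pd2 ha
  have hb2 : ContDiff ℝ (⊤ : ℕ∞) (unc (pd2 b)) := contDiff_pd2 hb
  have hc1 : ContDiff ℝ (⊤ : ℕ∞) (unc (pd1 c)) := contDiff_pd1 hc
  have hd1 : ContDiff ℝ (⊤ : ℕ∞) (unc (pd1 d)) := contDiff_pd1 hd
  have hac : ContDiff ℝ (⊤ : ℕ∞) (unc (fun x y => a x y * c x y)) := contDiff_mulc ha hc
  have had : ContDiff ℝ (⊤ : ℕ∞) (unc (fun x y => a x y * d x y)) := contDiff_mulc ha hd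
  have hca : ContDiff ℝ (⊤ : ℕ∞) (unc (fun x y => c x y * a x y)) := contDiff_mulc hc ha
  have hcb : ContDiff ℝ (⊤ : ℕ∞) (unc (fun x y => c x y * b x y)) := contDiff_mulc hc hb
  have F1 : pd1 (pd1 ψ) = fun x y => a x y • pd2 ψ x y + b x y • ψ x y :=
    funext fun x => funext fun y => H1 x y
  have F2 : pd2 (pd2 ψ) = fun x y => c x y • pd1 ψ x y + d x y • ψ x y :=
    funext fun x => funext fun y => H2 x y
  have FT1 : pd2 (pd1 (pd1 ψ)) = fun x' y' =>
      (a x' y' * c x' y') • pd1 ψ x' y' + (a x' y' * d x' y') • ψ x' y'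
        + pd2 a x' y' • pd2 ψ x' y' + b x' y' • pd2 ψ x' y' + pd2 b x' y' • ψ x' y' := by
    funext x' y'
    rw [F1, pd2_comb2 ha hv hb hψ x' y', H2 x' y']
    module
  have FT2 : pd1 (pd2 (pd2 ψ)) = fun x' y' =>
      (c x' y' * a x' y') • pd2 ψ x' y' + (c x' y' * b x' y') • ψ x' y'
        + pd1 c x' y' • pd1 ψ x' y' + d x' y' • pd1 ψ x' y' + pd1 d x' y' • ψ x' y' := by
    funext x' y'
    rw [F2, pd1_comb2 hc hu hd hψ x' y', H1 x' y']
    module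
  -- T expansion
  have hcomb := pd2_comb5 (c1 := fun x y => a x y * c x y) (w1 := pd1 ψ)
    (c2 := fun x y => a x y * d x y) (w2 := ψ) (c3 := pd2 a) (w3 := pd2 ψ)
    (c4 := b) (w4 := pd2 ψ) (c5 := pd2 b) (w5 := ψ)
    hac hu had hψ ha2 hv hb hv hb2 hψ x y
  rw [pd2_mulc ha hc x y, pd2_mulc ha hd x y, ← pd_swap hψ x y, H2 x y, ← FT1] at hcomb
  -- T' expansion
  have hcomb' := pd1_comb5 (c1 := fun x y => c x y * a x y) (w1 := pd2 ψ)
    (c2 := fun x y => c x y * b x y) (w2 := ψ) (c3 := pd1 c) (w3 := pd1 ψ)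
    (c4 := d) (w4 := pd1 ψ) (c5 := pd1 d) (w5 := ψ)
    hca hv hcb hψ hc1 hu hd hu hd1 hψ x y
  rw [pd1_mulc hc ha x y, pd1_mulc hc hb x y, H1 x y, ← FT2] at hcomb'
  -- mixed partials commute
  have e2 : pd2 (pd1 (pd1 ψ)) = pd1 (pd2 (pd1 ψ)) :=
    funext fun x => funext fun y => (pd_swap (contDiff_pd1 hψ) x y).symm
  have eψ : pd1 (pd2 ψ) = pd2 (pd1 ψ) :=
    funext fun x => funext fun y => pd_swap hψ x y
  have e4 : pd1 (pd2 (pd2 ψ)) = pd2 (pd1 (pd2 ψ)) :=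
    funext fun x => funext fun y => pd_swap (contDiff_pd2 hψ) x y
  have hTT' : pd2 (pd2 (pd1 (pd1 ψ))) x y = pd1 (pd1 (pd2 (pd2 ψ))) x y := by
    calc pd2 (pd2 (pd1 (pd1 ψ))) x y
        = pd2 (pd1 (pd2 (pd1 ψ))) x y := by rw [e2]
      _ = pd1 (pd2 (pd2 (pd1 ψ))) x y :=
          (pd_swap (contDiff_pd2 (contDiff_pd1 hψ)) x y).symm
      _ = pd1 (pd2 (pd1 (pd2 ψ))) x y := by rw [← eψ]
      _ = pd1 (pd1 (pd2 (pd2 ψ))) x y := by rw [← e4]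
  have hEq := hcomb.symm.trans (hTT'.trans hcomb')
  -- linear independence
  set Ψv : Fin 4 → E := ![ψ x y, pd1 ψ x y, pd2 ψ x y, pd1 (pd2 ψ) x y] with hΨv
  set g : Fin 4 → ℂ := ![2 * pd2 a x y * d x y + a x y * pd2 d x y + pd2 (pd2 b) x y
      - (2 * pd1 c x y * b x y + c x y * pd1 b x y + pd1 (pd1 d) x y),
    2 * pd2 a x y * c x y + a x y * pd2 c x y - pd1 (pd1 c) x y - 2 * pd1 d x y,
    pd2 (pd2 a) x y + 2 * pd2 b x y - 2 * pd1 c x y * a x y - c x y * pd1 a x y,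
    0] with hg
  have hsum : ∑ i : Fin 4, g i • Ψv i = 0 := by
    rw [Fin.sum_univ_four]
    simp only [hg, hΨv, Matrix.cons_val_zero, Matrix.cons_val_one, Matrix.head_cons,
      Matrix.cons_val_two, Matrix.tail_cons, Matrix.cons_val_three]
    linear_combination (norm := module) hEq
  have hall := Fintype.linearIndependent_iff.mp (hli x y) g hsum
  refine ⟨?_, ?_, ?_⟩
  · simpa [hg] using hall 0
  · simpa [hg] using hall 1
  · simpa [hg] using hall 2

end key

section shapes
variable {f g : ℝ → ℝ → ℝ}

theorem contDiff_ofReal2 (hf : ContDiff ℝ (⊤ : ℕ∞) (unc f)) :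
    ContDiff ℝ (⊤ : ℕ∞) (unc (fun x y => ((f x y : ℝ) : ℂ))) := by
  exact Complex.ofRealCLM.contDiff.comp hf

theorem contDiff_shapeA (hf : ContDiff ℝ (⊤ : ℕ∞) (unc f)) :
    ContDiff ℝ (⊤ : ℕ∞) (unc (fun x y => -(Complex.I * ((f x y : ℝ) : ℂ)))) := by
  exact (contDiff_const.mul (contDiff_ofReal2 hf)).neg

theorem contDiff_shapeC (hf : ContDiff ℝ (⊤ : ℕ∞) (unc f)) :
    ContDiff ℝ (⊤ : ℕ∞) (unc (fun x y => Complex.I * ((f x y : ℝ) : ℂ))) := by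
  exact contDiff_const.mul (contDiff_ofReal2 hf)

theorem contDiff_shapeB (hf : ContDiff ℝ (⊤ : ℕ∞) (unc f)) (hg : ContDiff ℝ (⊤ : ℕ∞) (unc g)) :
    ContDiff ℝ (⊤ : ℕ∞) (unc (fun x y => (((f x y : ℝ) : ℂ) + Complex.I * ((g x y : ℝ) : ℂ)) / 2)) := by
  exact ((contDiff_ofReal2 hf).add (contDiff_const.mul (contDiff_ofReal2 hg))).div_const 2

theorem contDiff_shapeD (hf : ContDiff ℝ (⊤ : ℕ∞) (unc f)) (hg : ContDiff ℝ (⊤ : ℕ∞) (unc g)) :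
    ContDiff ℝ (⊤ : ℕ∞) (unc (fun x y => (((f x y : ℝ) : ℂ) - Complex.I * ((g x y : ℝ) : ℂ)) / 2)) := by
  exact ((contDiff_ofReal2 hf).sub (contDiff_const.mul (contDiff_ofReal2 hg))).div_const 2

theorem pd1_shapeA (hf : ContDiff ℝ (⊤ : ℕ∞) (unc f)) (x y : ℝ) :
    pd1 (fun x y => -(Complex.I * ((f x y : ℝ) : ℂ))) x y
      = -(Complex.I * ((pd1 f x y : ℝ) : ℂ)) := by
  have := (((hasDerivAt_pd1 hf x y).ofReal_comp).const_mul Complex.I).neg.deriv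
  simpa [pd1] using this

theorem pd2_shapeA (hf : ContDiff ℝ (⊤ : ℕ∞) (unc f)) (x y : ℝ) :
    pd2 (fun x y => -(Complex.I * ((f x y : ℝ) : ℂ))) x y
      = -(Complex.I * ((pd2 f x y : ℝ) : ℂ)) := by
  have := (((hasDerivAt_pd2 hf x y).ofReal_comp).const_mul Complex.I).neg.deriv
  simpa [pd2] using this

theorem pd1_shapeC (hf : ContDiff ℝ (⊤ : ℕ∞) (unc f)) (x y : ℝ) :
    pd1 (fun x y => Complex.I * ((f x y : ℝ) : ℂ)) x y
      = Complex.I * ((pd1 f x y : ℝ) : ℂ) := by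
  have := (((hasDerivAt_pd1 hf x y).ofReal_comp).const_mul Complex.I).deriv
  simpa [pd1] using this

theorem pd2_shapeC (hf : ContDiff ℝ (⊤ : ℕ∞) (unc f)) (x y : ℝ) :
    pd2 (fun x y => Complex.I * ((f x y : ℝ) : ℂ)) x y
      = Complex.I * ((pd2 f x y : ℝ) : ℂ) := by
  have := (((hasDerivAt_pd2 hf x y).ofReal_comp).const_mul Complex.I).deriv
  simpa [pd2] using this

theorem pd1_shapeB (hf : ContDiff ℝ (⊤ : ℕ∞) (unc f)) (hg : ContDiff ℝ (⊤ : ℕ∞) (unc g)) (x y : ℝ) :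
    pd1 (fun x y => (((f x y : ℝ) : ℂ) + Complex.I * ((g x y : ℝ) : ℂ)) / 2) x y
      = (((pd1 f x y : ℝ) : ℂ) + Complex.I * ((pd1 g x y : ℝ) : ℂ)) / 2 := by
  have := (((hasDerivAt_pd1 hf x y).ofReal_comp).add
    (((hasDerivAt_pd1 hg x y).ofReal_comp).const_mul Complex.I)).div_const (2 : ℂ) |>.deriv
  simpa [pd1] using this

theorem pd2_shapeB (hf : ContDiff ℝ (⊤ : ℕ∞) (unc f)) (hg : ContDiff ℝ (⊤ : ℕ∞) (unc g)) (x y : ℝ) :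
    pd2 (fun x y => (((f x y : ℝ) : ℂ) + Complex.I * ((g x y : ℝ) : ℂ)) / 2) x y
      = (((pd2 f x y : ℝ) : ℂ) + Complex.I * ((pd2 g x y : ℝ) : ℂ)) / 2 := by
  have := (((hasDerivAt_pd2 hf x y).ofReal_comp).add
    (((hasDerivAt_pd2 hg x y).ofReal_comp).const_mul Complex.I)).div_const (2 : ℂ) |>.deriv
  simpa [pd2] using this

theorem pd1_shapeD (hf : ContDiff ℝ (⊤ : ℕ∞) (unc f)) (hg : ContDiff ℝ (⊤ : ℕ∞) (unc g)) (x y : ℝ) :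
    pd1 (fun x y => (((f x y : ℝ) : ℂ) - Complex.I * ((g x y : ℝ) : ℂ)) / 2) x y
      = (((pd1 f x y : ℝ) : ℂ) - Complex.I * ((pd1 g x y : ℝ) : ℂ)) / 2 := by
  have := (((hasDerivAt_pd1 hf x y).ofReal_comp).sub
    (((hasDerivAt_pd1 hg x y).ofReal_comp).const_mul Complex.I)).div_const (2 : ℂ) |>.deriv
  simpa [pd1] using this

theorem pd2_shapeD (hf : ContDiff ℝ (⊤ : ℕ∞) (unc f)) (hg : ContDiff ℝ (⊤ : ℕ∞) (unc g)) (x y : ℝ) :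
    pd2 (fun x y => (((f x y : ℝ) : ℂ) - Complex.I * ((g x y : ℝ) : ℂ)) / 2) x y
      = (((pd2 f x y : ℝ) : ℂ) - Complex.I * ((pd2 g x y : ℝ) : ℂ)) / 2 := by
  have := (((hasDerivAt_pd2 hf x y).ofReal_comp).sub
    (((hasDerivAt_pd2 hg x y).ofReal_comp).const_mul Complex.I)).div_const (2 : ℂ) |>.deriv
  simpa [pd2] using this

end shapes

/-- if `ψ` is a smooth solution of the Lie–Wilczynski system whose
vectors `ψ, ∂₁ψ, ∂₂ψ, ∂₁∂₂ψ` are everywhere linearly independent over ℂ, then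
the potentials satisfy the `Gauss-Codazzi' compatibility conditions. -/
theorem statement_2
    (p q V W : ℝ → ℝ → ℝ) (ψ : ℝ → ℝ → Fin 4 → ℂ)
    (hp : ContDiff ℝ (⊤ : ℕ∞) (fun z : ℝ × ℝ => p z.1 z.2))
    (hq : ContDiff ℝ (⊤ : ℕ∞) (fun z : ℝ × ℝ => q z.1 z.2))
    (hV : ContDiff ℝ (⊤ : ℕ∞) (fun z : ℝ × ℝ => V z.1 z.2))
    (hW : ContDiff ℝ (⊤ : ℕ∞) (fun z : ℝ × ℝ => W z.1 z.2))
    (hψ : ContDiff ℝ (⊤ : ℕ∞) (fun z : ℝ × ℝ => ψ z.1 z.2))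
    (hLW1 : ∀ x y, pd1 (pd1 ψ) x y
        = (-(Complex.I * (p x y : ℂ))) • pd2 ψ x y
          + (((V x y : ℂ) + Complex.I * ((pd2 p x y : ℝ) : ℂ)) / 2) • ψ x y)
    (hLW2 : ∀ x y, pd2 (pd2 ψ) x y
        = (Complex.I * (q x y : ℂ)) • pd1 ψ x y
          + (((W x y : ℂ) - Complex.I * ((pd1 q x y : ℝ) : ℂ)) / 2) • ψ x y)
    (hli : ∀ x y, LinearIndependent ℂ ![ψ x y, pd1 ψ x y, pd2 ψ x y, pd1 (pd2 ψ) x y]) :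
    (∀ x y,
      pd2 (pd2 (pd2 p)) x y - 2 * W x y * pd2 p x y - p x y * pd2 W x y
        + pd1 (pd1 (pd1 q)) x y - 2 * V x y * pd1 q x y - q x y * pd1 V x y = 0) ∧
    (∀ x y, pd1 W x y = 2 * q x y * pd2 p x y + p x y * pd2 q x y) ∧
    (∀ x y, pd2 V x y = 2 * p x y * pd1 q x y + q x y * pd1 p x y) := by

  have hp' : ContDiff ℝ (⊤ : ℕ∞) (unc p) := hp
  have hq' : ContDiff ℝ (⊤ : ℕ∞) (unc q) := hq
  have hV' : ContDiff ℝ (⊤ : ℕ∞) (unc V) := hV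
  have hW' : ContDiff ℝ (⊤ : ℕ∞) (unc W) := hW
  have hψ' : ContDiff ℝ (⊤ : ℕ∞) (unc ψ) := hψ
  have hp2 : ContDiff ℝ (⊤ : ℕ∞) (unc (pd2 p)) := contDiff_pd2 hp'
  have hp22 : ContDiff ℝ (⊤ : ℕ∞) (unc (pd2 (pd2 p))) := contDiff_pd2 hp2
  have hq1 : ContDiff ℝ (⊤ : ℕ∞) (unc (pd1 q)) := contDiff_pd1 hq'
  have hq11 : ContDiff ℝ (⊤ : ℕ∞) (unc (pd1 (pd1 q))) := contDiff_pd1 hq1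
  have hV2 : ContDiff ℝ (⊤ : ℕ∞) (unc (pd2 V)) := contDiff_pd2 hV'
  have hW1 : ContDiff ℝ (⊤ : ℕ∞) (unc (pd1 W)) := contDiff_pd1 hW'
  have key := key_abstract (ψ := ψ)
    (a := fun x y => -(Complex.I * ((p x y : ℝ) : ℂ)))
    (b := fun x y => (((V x y : ℝ) : ℂ) + Complex.I * ((pd2 p x y : ℝ) : ℂ)) / 2)
    (c := fun x y => Complex.I * ((q x y : ℝ) : ℂ))
    (d := fun x y => (((W x y : ℝ) : ℂ) - Complex.I * ((pd1 q x y : ℝ) : ℂ)) / 2)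
    hψ' (contDiff_shapeA hp') (contDiff_shapeB hV' hp2)
    (contDiff_shapeC hq') (contDiff_shapeD hW' hq1)
    (fun x y => hLW1 x y) (fun x y => hLW2 x y) hli
  -- second-derivative function identities
  have FA2 : pd2 (fun x y => -(Complex.I * ((p x y : ℝ) : ℂ)))
      = fun x y => -(Complex.I * ((pd2 p x y : ℝ) : ℂ)) :=
    funext fun x => funext fun y => pd2_shapeA hp' x y
  have sA22 : ∀ x y, pd2 (pd2 (fun x y => -(Complex.I * ((p x y : ℝ) : ℂ)))) x y
      = -(Complex.I * ((pd2 (pd2 p) x y : ℝ) : ℂ)) := by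
    intro x y; rw [FA2]; exact pd2_shapeA hp2 x y
  have FB2 : pd2 (fun x y => (((V x y : ℝ) : ℂ) + Complex.I * ((pd2 p x y : ℝ) : ℂ)) / 2)
      = fun x y => (((pd2 V x y : ℝ) : ℂ) + Complex.I * ((pd2 (pd2 p) x y : ℝ) : ℂ)) / 2 :=
    funext fun x => funext fun y => pd2_shapeB hV' hp2 x y
  have sB22 : ∀ x y,
      pd2 (pd2 (fun x y => (((V x y : ℝ) : ℂ) + Complex.I * ((pd2 p x y : ℝ) : ℂ)) / 2)) x y
      = (((pd2 (pd2 V) x y : ℝ) : ℂ) + Complex.I * ((pd2 (pd2 (pd2 p)) x y : ℝ) : ℂ)) / 2 := by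
    intro x y; rw [FB2]; exact pd2_shapeB hV2 hp22 x y
  have FC1 : pd1 (fun x y => Complex.I * ((q x y : ℝ) : ℂ))
      = fun x y => Complex.I * ((pd1 q x y : ℝ) : ℂ) :=
    funext fun x => funext fun y => pd1_shapeC hq' x y
  have sC11 : ∀ x y, pd1 (pd1 (fun x y => Complex.I * ((q x y : ℝ) : ℂ))) x y
      = Complex.I * ((pd1 (pd1 q) x y : ℝ) : ℂ) := by
    intro x y; rw [FC1]; exact pd1_shapeC hq1 x y
  have FD1 : pd1 (fun x y => (((W x y : ℝ) : ℂ) - Complex.I * ((pd1 q x y : ℝ) : ℂ)) / 2)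
      = fun x y => (((pd1 W x y : ℝ) : ℂ) - Complex.I * ((pd1 (pd1 q) x y : ℝ) : ℂ)) / 2 :=
    funext fun x => funext fun y => pd1_shapeD hW' hq1 x y
  have sD11 : ∀ x y,
      pd1 (pd1 (fun x y => (((W x y : ℝ) : ℂ) - Complex.I * ((pd1 q x y : ℝ) : ℂ)) / 2)) x y
      = (((pd1 (pd1 W) x y : ℝ) : ℂ) - Complex.I * ((pd1 (pd1 (pd1 q)) x y : ℝ) : ℂ)) / 2 := by
    intro x y; rw [FD1]; exact pd1_shapeD hW1 hq11 x y
  refine ⟨fun x y => ?_, fun x y => ?_, fun x y => ?_⟩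
  · -- goal 1, from (key x y).1
    have hg0 := (key x y).1
    rw [pd2_shapeA hp' x y, pd2_shapeD hW' hq1 x y, sB22 x y, pd1_shapeC hq' x y,
      pd1_shapeB hV' hp2 x y, sD11 x y] at hg0
    have h1' : ((pd2 (pd2 (pd2 p)) x y - 2 * W x y * pd2 p x y - p x y * pd2 W x y
        + pd1 (pd1 (pd1 q)) x y - 2 * V x y * pd1 q x y - q x y * pd1 V x y : ℝ) : ℂ)
          * Complex.I
        = ((p x y * pd2 (pd1 q) x y - q x y * pd1 (pd2 p) x y
            - pd2 (pd2 V) x y + pd1 (pd1 W) x y : ℝ) : ℂ) := by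
      push_cast
      linear_combination (2 : ℂ) * hg0
        - (((p x y : ℝ) : ℂ) * ((pd2 (pd1 q) x y : ℝ) : ℂ)
          - ((q x y : ℝ) : ℂ) * ((pd1 (pd2 p) x y : ℝ) : ℂ)) * Complex.I_sq
    have him := congrArg Complex.im h1'
    simpa using him
  · have hg1 := (key x y).2.1
    rw [pd2_shapeA hp' x y, pd2_shapeC hq' x y, sC11 x y, pd1_shapeD hW' hq1 x y] at hg1
    have h2' : ((pd1 W x y : ℝ) : ℂ)
        = ((2 * q x y * pd2 p x y + p x y * pd2 q x y : ℝ) : ℂ) := by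
      push_cast
      linear_combination (-1 : ℂ) * hg1
        - (2 * ((pd2 p x y : ℝ) : ℂ) * ((q x y : ℝ) : ℂ)
          + ((p x y : ℝ) : ℂ) * ((pd2 q x y : ℝ) : ℂ)) * Complex.I_sq
    exact_mod_cast h2'
  · have hg2 := (key x y).2.2
    rw [sA22 x y, pd2_shapeB hV' hp2 x y, pd1_shapeC hq' x y, pd1_shapeA hp' x y] at hg2
    have h3' : ((pd2 V x y : ℝ) : ℂ)
        = ((2 * p x y * pd1 q x y + q x y * pd1 p x y : ℝ) : ℂ) := by
      push_cast
      linear_combination hg2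
        - (2 * ((p x y : ℝ) : ℂ) * ((pd1 q x y : ℝ) : ℂ)
          + ((q x y : ℝ) : ℂ) * ((pd1 p x y : ℝ) : ℂ)) * Complex.I_sq
    exact_mod_cast h3'
end
end

section
/- Let r, n : ℝ² → ℝ³ and w¹, w² : ℝ² → ℝ be smooth with |n| = 1 everywhere, satisfying the Weingarten equations ∂₁r = w¹ ∂₁n and ∂₂r = w² ∂₂n, with w¹ ≠ w² at every point, and with G₁₁ := ⟨∂₁n, ∂₁n⟩ > 0 and G₂₂ := ⟨∂₂n, ∂₂n⟩ > 0 everywhere. Define the ℝ⁶-valued curvature-sphere maps U = ((1+|r|²−2w¹⟨r,n⟩)/2, (1−|r|²+2w¹⟨r,n⟩)/2, r−w¹n, w¹) and V = ((1+|r|²−2w²⟨r,n⟩)/2, (1−|r|²+2w²⟨r,n⟩)/2, r−w²n, w²), and the normalized vectors 𝒰 = U/(√G₂₂·(w²−w¹)) and 𝒱 = V/(√G₁₁·(w¹−w²)). Then the Dirac-type equations ∂₁𝒰 = p·𝒱 and ∂₂𝒱 = q·𝒰 hold, with p = (∂₁w¹/(w¹−w²))·√(G₁₁/G₂₂) and q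 = (∂₂w²/(w²−w¹))·√(G₂₂/G₁₁). -/
open Complex ComplexConjugate

noncomputable section

section AuxCalc

variable {E : Type*} [NormedAddCommGroup E] [NormedSpace ℝ E]

lemma hasDerivAt_slice1 (f : ℝ → ℝ → E) {x y : ℝ}
    (hf : DifferentiableAt ℝ (fun z : ℝ × ℝ => f z.1 z.2) (x, y)) :
    HasDerivAt (fun t => f t y) (fderiv ℝ (fun z : ℝ × ℝ => f z.1 z.2) (x, y) (1, 0)) x := by
  have h1 : HasDerivAt (fun t : ℝ => ((t, y) : ℝ × ℝ)) (1, 0) x :=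
    (hasDerivAt_id x).prodMk (hasDerivAt_const x y)
  exact hf.hasFDerivAt.comp_hasDerivAt x h1

lemma hasDerivAt_slice2 (f : ℝ → ℝ → E) {x y : ℝ}
    (hf : DifferentiableAt ℝ (fun z : ℝ × ℝ => f z.1 z.2) (x, y)) :
    HasDerivAt (fun t => f x t) (fderiv ℝ (fun z : ℝ × ℝ => f z.1 z.2) (x, y) (0, 1)) y := by
  have h1 : HasDerivAt (fun t : ℝ => ((x, t) : ℝ × ℝ)) (0, 1) y :=
    (hasDerivAt_const y x).prodMk (hasDerivAt_id y)
  exact hf.hasFDerivAt.comp_hasDerivAt y h1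

lemma pd1_hasDerivAt (f : ℝ → ℝ → E) (hf : ContDiff ℝ (⊤ : ℕ∞) (fun z : ℝ × ℝ => f z.1 z.2)) (x y : ℝ) :
    HasDerivAt (fun t => f t y) (pd1 f x y) x := by
  have h := hasDerivAt_slice1 f (hf.differentiable (by simp) (x, y))
  have h2 : pd1 f x y = fderiv ℝ (fun z : ℝ × ℝ => f z.1 z.2) (x, y) (1, 0) := h.deriv
  rw [h2]; exact h

lemma pd2_hasDerivAt (f : ℝ → ℝ → E) (hf : ContDiff ℝ (⊤ : ℕ∞) (fun z : ℝ × ℝ => f z.1 z.2)) (x y : ℝ) :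
    HasDerivAt (fun t => f x t) (pd2 f x y) y := by
  have h := hasDerivAt_slice2 f (hf.differentiable (by simp) (x, y))
  have h2 : pd2 f x y = fderiv ℝ (fun z : ℝ × ℝ => f z.1 z.2) (x, y) (0, 1) := h.deriv
  rw [h2]; exact h

lemma contDiff_pd1_s9 (f : ℝ → ℝ → E) (hf : ContDiff ℝ (⊤ : ℕ∞) (fun z : ℝ × ℝ => f z.1 z.2)) :
    ContDiff ℝ (⊤ : ℕ∞) (fun z : ℝ × ℝ => pd1 f z.1 z.2) := by
  have h : ContDiff ℝ (⊤ : ℕ∞) (fun z : ℝ × ℝ => fderiv ℝ (fun w : ℝ × ℝ => f w.1 w.2) z (1, 0)) :=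
    (hf.fderiv_right (by simp)).clm_apply contDiff_const
  have e : (fun z : ℝ × ℝ => pd1 f z.1 z.2)
      = fun z : ℝ × ℝ => fderiv ℝ (fun w : ℝ × ℝ => f w.1 w.2) z (1, 0) := by
    funext z
    obtain ⟨a, b⟩ := z
    exact (hasDerivAt_slice1 f (hf.differentiable (by simp) (a, b))).deriv
  rw [e]; exact h

lemma contDiff_pd2_s9 (f : ℝ → ℝ → E) (hf : ContDiff ℝ (⊤ : ℕ∞) (fun z : ℝ × ℝ => f z.1 z.2)) :
    ContDiff ℝ (⊤ : ℕ∞) (fun z : ℝ × ℝ => pd2 f z.1 z.2) := by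
  have h : ContDiff ℝ (⊤ : ℕ∞) (fun z : ℝ × ℝ => fderiv ℝ (fun w : ℝ × ℝ => f w.1 w.2) z (0, 1)) :=
    (hf.fderiv_right (by simp)).clm_apply contDiff_const
  have e : (fun z : ℝ × ℝ => pd2 f z.1 z.2)
      = fun z : ℝ × ℝ => fderiv ℝ (fun w : ℝ × ℝ => f w.1 w.2) z (0, 1) := by
    funext z
    obtain ⟨a, b⟩ := z
    exact (hasDerivAt_slice2 f (hf.differentiable (by simp) (a, b))).deriv
  rw [e]; exact h

lemma pd_comm (f : ℝ → ℝ → E) (hf : ContDiff ℝ (⊤ : ℕ∞) (fun z : ℝ × ℝ => f z.1 z.2)) (x y : ℝ) :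
    pd1 (fun a b => pd2 f a b) x y = pd2 (fun a b => pd1 f a b) x y := by
  set F : ℝ × ℝ → E := fun z => f z.1 z.2 with hF
  have hd : ∀ z, HasFDerivAt F (fderiv ℝ F z) z :=
    fun z => (hf.differentiable (by simp) z).hasFDerivAt
  have hF' : ContDiff ℝ (⊤ : ℕ∞) (fderiv ℝ F) := hf.fderiv_right (by simp)
  have h2 : HasFDerivAt (fderiv ℝ F) (fderiv ℝ (fderiv ℝ F) (x, y)) (x, y) :=
    (hF'.differentiable (by simp) (x, y)).hasFDerivAt
  have hsymm := second_derivative_symmetric hd h2 ((1:ℝ), (0:ℝ)) ((0:ℝ), (1:ℝ))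
  have A : HasDerivAt (fun t => pd2 f t y)
      ((fderiv ℝ (fderiv ℝ F) (x, y) ((1:ℝ), (0:ℝ))) ((0:ℝ), (1:ℝ))) x := by
    have happ : HasFDerivAt (fun z => fderiv ℝ F z (((0:ℝ), (1:ℝ)) : ℝ × ℝ))
        (((ContinuousLinearMap.apply ℝ E (((0:ℝ), (1:ℝ)) : ℝ × ℝ))).comp
          (fderiv ℝ (fderiv ℝ F) (x, y))) (x, y) :=
      ((ContinuousLinearMap.apply ℝ E (((0:ℝ), (1:ℝ)) : ℝ × ℝ)).hasFDerivAt).comp (x, y) h2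
    have h1 : HasDerivAt (fun t : ℝ => ((t, y) : ℝ × ℝ)) (1, 0) x :=
      (hasDerivAt_id x).prodMk (hasDerivAt_const x y)
    have hc := happ.comp_hasDerivAt x h1
    have e : (fun t => pd2 f t y) = fun t : ℝ => fderiv ℝ F (t, y) (((0:ℝ), (1:ℝ)) : ℝ × ℝ) :=
      funext fun t => (hasDerivAt_slice2 f (hf.differentiable (by simp) (t, y))).deriv
    rw [e]
    simpa [Function.comp_def] using hc
  have B : HasDerivAt (fun t => pd1 f x t)
      ((fderiv ℝ (fderiv ℝ F) (x, y) ((0:ℝ), (1:ℝ))) ((1:ℝ), (0:ℝ))) y := by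
    have happ : HasFDerivAt (fun z => fderiv ℝ F z (((1:ℝ), (0:ℝ)) : ℝ × ℝ))
        (((ContinuousLinearMap.apply ℝ E (((1:ℝ), (0:ℝ)) : ℝ × ℝ))).comp
          (fderiv ℝ (fderiv ℝ F) (x, y))) (x, y) :=
      ((ContinuousLinearMap.apply ℝ E (((1:ℝ), (0:ℝ)) : ℝ × ℝ)).hasFDerivAt).comp (x, y) h2
    have h1 : HasDerivAt (fun t : ℝ => ((x, t) : ℝ × ℝ)) (0, 1) y :=
      (hasDerivAt_const y x).prodMk (hasDerivAt_id y)
    have hc := happ.comp_hasDerivAt y h1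
    have e : (fun t => pd1 f x t) = fun t : ℝ => fderiv ℝ F (x, t) (((1:ℝ), (0:ℝ)) : ℝ × ℝ) :=
      funext fun t => (hasDerivAt_slice1 f (hf.differentiable (by simp) (x, t))).deriv
    rw [e]
    simpa [Function.comp_def] using hc
  have hA : pd1 (fun a b => pd2 f a b) x y = _ := A.deriv
  have hB : pd2 (fun a b => pd1 f a b) x y = _ := B.deriv
  rw [hA, hB, hsymm]

lemma dot3_comm (u v : Fin 3 → ℝ) : dot3 u v = dot3 v u := by simp [dot3]; ring

lemma dot3_smul_left (c : ℝ) (u v : Fin 3 → ℝ) : dot3 (c • u) v = c * dot3 u v := by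
  simp [dot3]; ring

lemma dot3_smul_right (c : ℝ) (u v : Fin 3 → ℝ) : dot3 u (c • v) = c * dot3 u v := by
  simp [dot3]; ring

lemma dot3_sub_left (u v w : Fin 3 → ℝ) : dot3 (u - v) w = dot3 u w - dot3 v w := by
  simp [dot3]; ring

lemma consValFive {α : Type*} (x₀ x₁ x₂ x₃ x₄ x₅ : α) :
    ![x₀, x₁, x₂, x₃, x₄, x₅] 5 = x₅ := rfl

lemma consValFive' {α : Type*} (x₀ x₁ x₂ x₃ x₄ x₅ : α) (h : (5:ℕ) < 6) :
    ![x₀, x₁, x₂, x₃, x₄, x₅] ⟨5, h⟩ = x₅ := rfl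

lemma hasDerivAt_dot3 {u v : ℝ → Fin 3 → ℝ} {u' v' : Fin 3 → ℝ} {x : ℝ}
    (hu : HasDerivAt u u' x) (hv : HasDerivAt v v' x) :
    HasDerivAt (fun t => dot3 (u t) (v t)) (dot3 u' (v x) + dot3 (u x) v') x := by
  have hui := hasDerivAt_pi.1 hu
  have hvi := hasDerivAt_pi.1 hv
  have h := (((hui 0).mul (hvi 0)).add ((hui 1).mul (hvi 1))).add ((hui 2).mul (hvi 2))
  have e : (fun t => dot3 (u t) (v t))
      = fun t => u t 0 * v t 0 + u t 1 * v t 1 + u t 2 * v t 2 := rfl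
  rw [e]
  refine h.congr_deriv ?_
  simp [dot3]; ring

end AuxCalc

set_option maxHeartbeats 2000000 in
lemma key_lemma
    (r n : ℝ → ℝ → Fin 3 → ℝ) (w₁ w₂ : ℝ → ℝ → ℝ)
    (hr : ContDiff ℝ (⊤ : ℕ∞) (fun z : ℝ × ℝ => r z.1 z.2))
    (hn : ContDiff ℝ (⊤ : ℕ∞) (fun z : ℝ × ℝ => n z.1 z.2))
    (hw₁ : ContDiff ℝ (⊤ : ℕ∞) (fun z : ℝ × ℝ => w₁ z.1 z.2))
    (hw₂ : ContDiff ℝ (⊤ : ℕ∞) (fun z : ℝ × ℝ => w₂ z.1 z.2))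
    (hunit : ∀ x y, dot3 (n x y) (n x y) = 1)
    (hWein1 : ∀ x y, pd1 r x y = w₁ x y • pd1 n x y)
    (hWein2 : ∀ x y, pd2 r x y = w₂ x y • pd2 n x y)
    (hne : ∀ x y, w₁ x y ≠ w₂ x y)
    (hG11 : ∀ x y, 0 < dot3 (pd1 n x y) (pd1 n x y))
    (hG22 : ∀ x y, 0 < dot3 (pd2 n x y) (pd2 n x y))
    (U V 𝒰 𝒱 : ℝ → ℝ → Fin 6 → ℝ) (p : ℝ → ℝ → ℝ)
    (hU : ∀ x y, U x y
        = ![(1 + dot3 (r x y) (r x y) - 2 * w₁ x y * dot3 (r x y) (n x y)) / 2,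
            (1 - dot3 (r x y) (r x y) + 2 * w₁ x y * dot3 (r x y) (n x y)) / 2,
            r x y 0 - w₁ x y * n x y 0, r x y 1 - w₁ x y * n x y 1,
            r x y 2 - w₁ x y * n x y 2, w₁ x y])
    (hV : ∀ x y, V x y
        = ![(1 + dot3 (r x y) (r x y) - 2 * w₂ x y * dot3 (r x y) (n x y)) / 2,
            (1 - dot3 (r x y) (r x y) + 2 * w₂ x y * dot3 (r x y) (n x y)) / 2,
            r x y 0 - w₂ x y * n x y 0, r x y 1 - w₂ x y * n x y 1,
            r x y 2 - w₂ x y * n x y 2, w₂ x y])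
    (h𝒰 : ∀ x y, 𝒰 x y
        = (Real.sqrt (dot3 (pd2 n x y) (pd2 n x y)) * (w₂ x y - w₁ x y))⁻¹ • U x y)
    (h𝒱 : ∀ x y, 𝒱 x y
        = (Real.sqrt (dot3 (pd1 n x y) (pd1 n x y)) * (w₁ x y - w₂ x y))⁻¹ • V x y)
    (hp : ∀ x y, p x y
        = pd1 w₁ x y / (w₁ x y - w₂ x y)
          * Real.sqrt (dot3 (pd1 n x y) (pd1 n x y) / dot3 (pd2 n x y) (pd2 n x y))) :
    ∀ x y, pd1 𝒰 x y = p x y • 𝒱 x y := by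
  -- orthogonality of n with its partial derivatives
  have hn1n : ∀ x y, dot3 (pd1 n x y) (n x y) = 0 := by
    intro x y
    have h := hasDerivAt_dot3 (pd1_hasDerivAt n hn x y) (pd1_hasDerivAt n hn x y)
    have e : (fun t => dot3 (n t y) (n t y)) = fun _ => (1:ℝ) := funext fun t => hunit t y
    rw [e] at h
    have h0 := h.unique (hasDerivAt_const x 1)
    rw [dot3_comm (n x y)] at h0
    linarith
  have hn2n : ∀ x y, dot3 (pd2 n x y) (n x y) = 0 := by
    intro x y
    have h := hasDerivAt_dot3 (pd2_hasDerivAt n hn x y) (pd2_hasDerivAt n hn x y)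
    have e : (fun t => dot3 (n x t) (n x t)) = fun _ => (1:ℝ) := funext fun t => hunit x t
    rw [e] at h
    have h0 := h.unique (hasDerivAt_const y 1)
    rw [dot3_comm (n x y)] at h0
    linarith
  intro x y
  have hcr := pd_comm r hr x y
  have hcn := pd_comm n hn x y
  have hww : w₁ x y - w₂ x y ≠ 0 := sub_ne_zero.2 (hne x y)
  -- G₁₂ = 0
  have hG12 : dot3 (pd1 n x y) (pd2 n x y) = 0 := by
    have hψ1 : ∀ x' y', dot3 (pd1 r x' y') (n x' y') = 0 := by
      intro x' y'; rw [hWein1, dot3_smul_left, hn1n]; ring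
    have hψ2 : ∀ x' y', dot3 (pd2 r x' y') (n x' y') = 0 := by
      intro x' y'; rw [hWein2, dot3_smul_left, hn2n]; ring
    have h1 := hasDerivAt_dot3
      (pd2_hasDerivAt (fun a b => pd1 r a b) (contDiff_pd1_s9 r hr) x y)
      (pd2_hasDerivAt n hn x y)
    have e1 : (fun t => dot3 (pd1 r x t) (n x t)) = fun _ => (0:ℝ) :=
      funext fun t => hψ1 x t
    rw [e1] at h1
    have h1' := (h1.unique (hasDerivAt_const y 0)).symm
    have h2 := hasDerivAt_dot3
      (pd1_hasDerivAt (fun a b => pd2 r a b) (contDiff_pd2_s9 r hr) x y)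
      (pd1_hasDerivAt n hn x y)
    have e2 : (fun t => dot3 (pd2 r t y) (n t y)) = fun _ => (0:ℝ) :=
      funext fun t => hψ2 t y
    rw [e2] at h2
    have h2' := (h2.unique (hasDerivAt_const x 0)).symm
    rw [hcr] at h2'
    -- h1' : 0 = dot3 (pd2 (pd1 r) x y) (n x y) + dot3 (pd1 r x y) (pd2 n x y)
    -- h2' : 0 = dot3 (pd2 (pd1 r) x y) (n x y) + dot3 (pd2 r x y) (pd1 n x y)
    rw [hWein1, dot3_smul_left] at h1'
    rw [hWein2, dot3_smul_left, dot3_comm (pd2 n x y)] at h2'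
    have hkey : (w₁ x y - w₂ x y) * dot3 (pd1 n x y) (pd2 n x y) = 0 := by linarith
    rcases mul_eq_zero.1 hkey with h | h
    · exact absurd h hww
    · exact h
  -- Codazzi
  have hCod : (w₁ x y - w₂ x y) • pd1 (fun a b => pd2 n a b) x y
      = pd1 w₂ x y • pd2 n x y - pd2 w₁ x y • pd1 n x y := by
    have hA : HasDerivAt (fun t => pd1 r x t)
        (w₁ x y • pd2 (fun a b => pd1 n a b) x y + pd2 w₁ x y • pd1 n x y) y := by
      have h := (pd2_hasDerivAt w₁ hw₁ x y).smul
        (pd2_hasDerivAt (fun a b => pd1 n a b) (contDiff_pd1_s9 n hn) x y)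
      have e : (fun t => pd1 r x t) = fun t => w₁ x t • pd1 n x t :=
        funext fun t => hWein1 x t
      rw [e]; exact h
    have hA' : pd2 (fun a b => pd1 r a b) x y = _ := hA.deriv
    have hB : HasDerivAt (fun t => pd2 r t y)
        (w₂ x y • pd1 (fun a b => pd2 n a b) x y + pd1 w₂ x y • pd2 n x y) x := by
      have h := (pd1_hasDerivAt w₂ hw₂ x y).smul
        (pd1_hasDerivAt (fun a b => pd2 n a b) (contDiff_pd2_s9 n hn) x y)
      have e : (fun t => pd2 r t y) = fun t => w₂ t y • pd2 n t y :=
        funext fun t => hWein2 t y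
      rw [e]; exact h
    have hB' : pd1 (fun a b => pd2 r a b) x y = _ := hB.deriv
    rw [hcr, hA', hcn] at hB'
    rw [hcn, sub_smul]
    linear_combination (norm := module) hB'
  -- derivative of G₂₂ in the first variable
  have hXval : dot3 (pd1 (fun a b => pd2 n a b) x y) (pd2 n x y)
      = pd1 w₂ x y * dot3 (pd2 n x y) (pd2 n x y) / (w₁ x y - w₂ x y) := by
    have h := congrArg (fun v => dot3 v (pd2 n x y)) hCod
    simp only [dot3_smul_left, dot3_sub_left] at h
    rw [hG12] at h
    field_simp
    linear_combination h
  have hG2slice : HasDerivAt (fun t => dot3 (pd2 n t y) (pd2 n t y))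
      (2 * (pd1 w₂ x y * dot3 (pd2 n x y) (pd2 n x y) / (w₁ x y - w₂ x y))) x := by
    have h := hasDerivAt_dot3
      (pd1_hasDerivAt (fun a b => pd2 n a b) (contDiff_pd2_s9 n hn) x y)
      (pd1_hasDerivAt (fun a b => pd2 n a b) (contDiff_pd2_s9 n hn) x y)
    convert h using 1
    rw [dot3_comm (pd2 n x y) (pd1 (fun a b => pd2 n a b) x y), hXval]
    ring
  -- derivative of the normalization factor
  have hS2pos : 0 < Real.sqrt (dot3 (pd2 n x y) (pd2 n x y)) := Real.sqrt_pos.2 (hG22 x y)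
  have hS2sq : Real.sqrt (dot3 (pd2 n x y) (pd2 n x y))
      * Real.sqrt (dot3 (pd2 n x y) (pd2 n x y)) = dot3 (pd2 n x y) (pd2 n x y) :=
    Real.mul_self_sqrt (le_of_lt (hG22 x y))
  have hsq : HasDerivAt (fun t => Real.sqrt (dot3 (pd2 n t y) (pd2 n t y)))
      (1 / (2 * Real.sqrt (dot3 (pd2 n x y) (pd2 n x y)))
        * (2 * (pd1 w₂ x y * dot3 (pd2 n x y) (pd2 n x y) / (w₁ x y - w₂ x y)))) x := by
    have h := (Real.hasDerivAt_sqrt (ne_of_gt (hG22 x y))).comp x hG2slice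
    simpa [Function.comp_def] using h
  have hfd : HasDerivAt
      (fun t => Real.sqrt (dot3 (pd2 n t y) (pd2 n t y)) * (w₂ t y - w₁ t y))
      (-(Real.sqrt (dot3 (pd2 n x y) (pd2 n x y)) * pd1 w₁ x y)) x := by
    have h := hsq.mul ((pd1_hasDerivAt w₂ hw₂ x y).sub (pd1_hasDerivAt w₁ hw₁ x y))
    refine h.congr_deriv ?_
    simp only [Pi.sub_apply]
    field_simp
    linear_combination (-(pd1 w₂ x y * (w₂ x y - w₁ x y))) * hS2sq
  have hfne : Real.sqrt (dot3 (pd2 n x y) (pd2 n x y)) * (w₂ x y - w₁ x y) ≠ 0 :=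
    mul_ne_zero (ne_of_gt hS2pos) (sub_ne_zero.2 (Ne.symm (hne x y)))
  -- derivatives of the scalar ingredients of U
  have hrr : HasDerivAt (fun t => dot3 (r t y) (r t y))
      (2 * (w₁ x y * dot3 (r x y) (pd1 n x y))) x := by
    have h := hasDerivAt_dot3 (pd1_hasDerivAt r hr x y) (pd1_hasDerivAt r hr x y)
    convert h using 1
    rw [hWein1, dot3_smul_left, dot3_smul_right, dot3_comm (pd1 n x y) (r x y)]
    ring
  have hrn : HasDerivAt (fun t => dot3 (r t y) (n t y)) (dot3 (r x y) (pd1 n x y)) x := by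
    have h := hasDerivAt_dot3 (pd1_hasDerivAt r hr x y) (pd1_hasDerivAt n hn x y)
    convert h using 1
    rw [hWein1, dot3_smul_left, hn1n]
    ring
  -- derivative of U
  have hUd : HasDerivAt (fun t => U t y)
      (pd1 w₁ x y • ![-(dot3 (r x y) (n x y)), dot3 (r x y) (n x y),
        -(n x y 0), -(n x y 1), -(n x y 2), 1]) x := by
    have e : (fun t => U t y) = fun t =>
        ![(1 + dot3 (r t y) (r t y) - 2 * w₁ t y * dot3 (r t y) (n t y)) / 2,
          (1 - dot3 (r t y) (r t y) + 2 * w₁ t y * dot3 (r t y) (n t y)) / 2,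
          r t y 0 - w₁ t y * n t y 0, r t y 1 - w₁ t y * n t y 1,
          r t y 2 - w₁ t y * n t y 2, w₁ t y] := funext fun t => hU t y
    rw [e]
    refine hasDerivAt_pi.2 ?_
    have hw1d := pd1_hasDerivAt w₁ hw₁ x y
    have hnd := hasDerivAt_pi.1 (pd1_hasDerivAt n hn x y)
    have hrd := hasDerivAt_pi.1 (pd1_hasDerivAt r hr x y)
    have hrdw : ∀ i, pd1 r x y i = w₁ x y * pd1 n x y i := by
      intro i; rw [hWein1]; simp
    intro i
    fin_cases i <;>
      simp [consValFive, consValFive']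
    · have h := (((hasDerivAt_const x (1:ℝ)).add hrr).sub
        (((hasDerivAt_const x (2:ℝ)).mul hw1d).mul hrn)).div_const 2
      refine h.congr_deriv ?_
      simp only [Pi.mul_apply]
      ring
    · have h := (((hasDerivAt_const x (1:ℝ)).sub hrr).add
        (((hasDerivAt_const x (2:ℝ)).mul hw1d).mul hrn)).div_const 2
      refine h.congr_deriv ?_
      simp only [Pi.mul_apply]
      ring
    · have h := (hrd 0).sub (hw1d.mul (hnd 0))
      refine h.congr_deriv ?_
      rw [hrdw 0]; ring
    · have h := (hrd 1).sub (hw1d.mul (hnd 1))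
      refine h.congr_deriv ?_
      rw [hrdw 1]; ring
    · have h := (hrd 2).sub (hw1d.mul (hnd 2))
      refine h.congr_deriv ?_
      rw [hrdw 2]; ring
    · simpa using hw1d
  -- assemble
  have e𝒰 : (fun t => 𝒰 t y) = fun t =>
      (Real.sqrt (dot3 (pd2 n t y) (pd2 n t y)) * (w₂ t y - w₁ t y))⁻¹ • U t y :=
    funext fun t => h𝒰 t y
  have h := (hfd.inv hfne).smul hUd
  simp only [Pi.inv_apply] at h
  change HasDerivAt (fun t => (Real.sqrt (dot3 (pd2 n t y) (pd2 n t y)) * (w₂ t y - w₁ t y))⁻¹ • U t y) _ x at h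
  rw [← e𝒰] at h
  have hD : pd1 𝒰 x y = _ := h.deriv
  have hS1pos : 0 < Real.sqrt (dot3 (pd1 n x y) (pd1 n x y)) := Real.sqrt_pos.2 (hG11 x y)
  have hS1ne : Real.sqrt (dot3 (pd1 n x y) (pd1 n x y)) ≠ 0 := ne_of_gt hS1pos
  have hS2ne : Real.sqrt (dot3 (pd2 n x y) (pd2 n x y)) ≠ 0 := ne_of_gt hS2pos
  have hww2 : w₂ x y - w₁ x y ≠ 0 := sub_ne_zero.2 (Ne.symm (hne x y))
  have hsd : Real.sqrt (dot3 (pd1 n x y) (pd1 n x y) / dot3 (pd2 n x y) (pd2 n x y))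
      = Real.sqrt (dot3 (pd1 n x y) (pd1 n x y)) / Real.sqrt (dot3 (pd2 n x y) (pd2 n x y)) :=
    Real.sqrt_div (le_of_lt (hG11 x y)) _
  rw [hD, h𝒱 x y, hp x y, hU x y, hV x y, hsd]
  set a := pd1 w₁ x y with ha
  set S1 := Real.sqrt (dot3 (pd1 n x y) (pd1 n x y)) with hS1
  set S2 := Real.sqrt (dot3 (pd2 n x y) (pd2 n x y)) with hS2
  set A := w₁ x y with hA
  set B := w₂ x y with hB
  set ρ := dot3 (r x y) (n x y) with hρ
  set rr := dot3 (r x y) (r x y) with hrr2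
  set r0 := r x y 0 with hr0
  set r1 := r x y 1 with hr1
  set r2 := r x y 2 with hr2
  set n0 := n x y 0 with hn0
  set n1 := n x y 1 with hn1
  set n2 := n x y 2 with hn2
  clear hD hUd hfd hsq hG2slice hrr hrn h e𝒰
  funext i
  fin_cases i <;>
    simp only [consValFive, consValFive', Matrix.cons_val_zero, Matrix.cons_val_one,
      Matrix.head_cons, Matrix.cons_val_two, Matrix.tail_cons, Matrix.cons_val_three,
      Matrix.cons_val_four, Pi.smul_apply, Pi.add_apply, smul_eq_mul, Fin.zero_eta,
      Fin.mk_one, Fin.reduceFinMk] <;>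
    field_simp <;>
    ring



/-- the normalized curvature-sphere maps of a surface given in
curvature line coordinates satisfy the Dirac-type equations `∂₁𝒰 = p·𝒱`,
`∂₂𝒱 = q·𝒰` with the Lie-invariant coefficients `p` and `q`. -/
theorem statement_9
    (r n : ℝ → ℝ → Fin 3 → ℝ) (w₁ w₂ : ℝ → ℝ → ℝ)
    (hr : ContDiff ℝ (⊤ : ℕ∞) (fun z : ℝ × ℝ => r z.1 z.2))
    (hn : ContDiff ℝ (⊤ : ℕ∞) (fun z : ℝ × ℝ => n z.1 z.2))
    (hw₁ : ContDiff ℝ (⊤ : ℕ∞) (fun z : ℝ × ℝ => w₁ z.1 z.2))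
    (hw₂ : ContDiff ℝ (⊤ : ℕ∞) (fun z : ℝ × ℝ => w₂ z.1 z.2))
    (hunit : ∀ x y, dot3 (n x y) (n x y) = 1)
    (hWein1 : ∀ x y, pd1 r x y = w₁ x y • pd1 n x y)
    (hWein2 : ∀ x y, pd2 r x y = w₂ x y • pd2 n x y)
    (hne : ∀ x y, w₁ x y ≠ w₂ x y)
    (hG11 : ∀ x y, 0 < dot3 (pd1 n x y) (pd1 n x y))
    (hG22 : ∀ x y, 0 < dot3 (pd2 n x y) (pd2 n x y))
    (U V 𝒰 𝒱 : ℝ → ℝ → Fin 6 → ℝ) (p q : ℝ → ℝ → ℝ)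
    (hU : ∀ x y, U x y
        = ![(1 + dot3 (r x y) (r x y) - 2 * w₁ x y * dot3 (r x y) (n x y)) / 2,
            (1 - dot3 (r x y) (r x y) + 2 * w₁ x y * dot3 (r x y) (n x y)) / 2,
            r x y 0 - w₁ x y * n x y 0, r x y 1 - w₁ x y * n x y 1,
            r x y 2 - w₁ x y * n x y 2, w₁ x y])
    (hV : ∀ x y, V x y
        = ![(1 + dot3 (r x y) (r x y) - 2 * w₂ x y * dot3 (r x y) (n x y)) / 2,
            (1 - dot3 (r x y) (r x y) + 2 * w₂ x y * dot3 (r x y) (n x y)) / 2,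
            r x y 0 - w₂ x y * n x y 0, r x y 1 - w₂ x y * n x y 1,
            r x y 2 - w₂ x y * n x y 2, w₂ x y])
    (h𝒰 : ∀ x y, 𝒰 x y
        = (Real.sqrt (dot3 (pd2 n x y) (pd2 n x y)) * (w₂ x y - w₁ x y))⁻¹ • U x y)
    (h𝒱 : ∀ x y, 𝒱 x y
        = (Real.sqrt (dot3 (pd1 n x y) (pd1 n x y)) * (w₁ x y - w₂ x y))⁻¹ • V x y)
    (hp : ∀ x y, p x y
        = pd1 w₁ x y / (w₁ x y - w₂ x y)
          * Real.sqrt (dot3 (pd1 n x y) (pd1 n x y) / dot3 (pd2 n x y) (pd2 n x y)))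
    (hq : ∀ x y, q x y
        = pd2 w₂ x y / (w₂ x y - w₁ x y)
          * Real.sqrt (dot3 (pd2 n x y) (pd2 n x y) / dot3 (pd1 n x y) (pd1 n x y))) :
    ∀ x y, pd1 𝒰 x y = p x y • 𝒱 x y ∧ pd2 𝒱 x y = q x y • 𝒰 x y := by
  intro x y
  constructor
  · exact key_lemma r n w₁ w₂ hr hn hw₁ hw₂ hunit hWein1 hWein2 hne hG11 hG22
      U V 𝒰 𝒱 p hU hV h𝒰 h𝒱 hp x y
  · have hswap := key_lemma (fun a b => r b a) (fun a b => n b a)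
      (fun a b => w₂ b a) (fun a b => w₁ b a)
      (hr.comp (contDiff_snd.prodMk contDiff_fst))
      (hn.comp (contDiff_snd.prodMk contDiff_fst))
      (hw₂.comp (contDiff_snd.prodMk contDiff_fst))
      (hw₁.comp (contDiff_snd.prodMk contDiff_fst))
      (fun a b => hunit b a)
      (fun a b => hWein2 b a) (fun a b => hWein1 b a)
      (fun a b => (hne b a).symm)
      (fun a b => hG22 b a) (fun a b => hG11 b a)
      (fun a b => V b a) (fun a b => U b a) (fun a b => 𝒱 b a) (fun a b => 𝒰 b a)
      (fun a b => q b a)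
      (fun a b => hV b a) (fun a b => hU b a)
      (fun a b => h𝒱 b a) (fun a b => h𝒰 b a)
      (fun a b => hq b a)
    exact hswap y x
end
end
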